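/- The structure (G, ⊕) is gyrocommutative: for all a, b ∈ G, a ⊕ b = gyr(a,b)(b ⊕ a). -/

import Mathlib

open scoped Classical

noncomputable section

/-- `m = 2^(n-1)` -/
def m (n : ℕ) : ℤ := 2 ^ (n - 1)

/-- `P = {0, 1, ..., m-1}` -/
def Pset (n : ℕ) : Set ℤ := {x | 0 ≤ x ∧ x < m n}

/-- `H = {m, m+1, ..., 2m-1}` -/
def Hset (n : ℕ) : Set ℤ := {x | m n ≤ x ∧ x < 2 * m n}

/-- `G = {0, 1, ..., 2^n - 1}` -/
def Gset (n : ℕ) : Set ℤ := {x | 0 ≤ x ∧ x < 2 ^ n}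

/-- odd elements of `P` -/
def OP (n : ℕ) : Set ℤ := {x | x ∈ Pset n ∧ Odd x}

/-- even elements of `P` -/
def EP (n : ℕ) : Set ℤ := {x | x ∈ Pset n ∧ Even x}

/-- odd elements of `H` -/
def OH (n : ℕ) : Set ℤ := {x | x ∈ Hset n ∧ Odd x}

/-- even elements of `H` -/
def EH (n : ℕ) : Set ℤ := {x | x ∈ Hset n ∧ Even x}

/-- The binary operation `⊕` on `G`.  Here `(i+j) % m n` is the unique `t ∈ P` with
`t ≡ i + j (mod m)` and `(i+j+m/2) % m n` is the unique `s ∈ P` with `s ≡ i+j+m/2 (mod m)`. -/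
def oplus (n : ℕ) (i j : ℤ) : ℤ :=
  if i ∈ EH n ∧ j ∈ OH n then (i + j + m n / 2) % m n
  else if i ∈ EH n ∧ j ∈ OP n then (i + j + m n / 2) % m n + m n
  else if (i ∈ Pset n ∧ j ∈ Pset n) ∨ (i ∈ Hset n ∧ j ∈ Hset n) then (i + j) % m n
  else (i + j) % m n + m n

/-- The map `A : G → G`; `(i + m/2) % m n` is the unique `r ∈ P` with `r ≡ i + m/2 (mod m)`. -/
def Amap (n : ℕ) (i : ℤ) : ℤ :=
  if i ∈ OP n then (i + m n / 2) % m n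
  else if i ∈ OH n then (i + m n / 2) % m n + m n
  else i

/-- `M = (O_P × (O_H ∪ E_H)) ∪ (O_H × (O_P ∪ E_H)) ∪ (E_H × (O_P ∪ O_H))` -/
def Mset (n : ℕ) : Set (ℤ × ℤ) :=
  (OP n ×ˢ (OH n ∪ EH n)) ∪ (OH n ×ˢ (OP n ∪ EH n)) ∪ (EH n ×ˢ (OP n ∪ OH n))

/-- `gyr(a,b) = A` if `(a,b) ∈ M`, and the identity otherwise. -/
def gyr (n : ℕ) (a b : ℤ) : ℤ → ℤ :=
  if (a, b) ∈ Mset n then Amap n else id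

/-!
An element of `G` is determined by its residue mod `m` together with the half, `P` or `H`, it lies
in. The half of `a ⊕ b` is symmetric in `a` and `b`, and `A` preserves halves. Mod `m`,
`a ⊕ b ≡ a + b + τ(a, b)`, where the twist `τ(a, b)` is `m/2` if `a ∈ E_H` and `b` is odd and `0`
otherwise, while `A` adds `m/2` to odd elements; since `4 ∣ m`, `b ⊕ a` has the parity of `a + b`.
Gyrocommutativity thus comes down to `τ(a, b) ≡ τ(b, a) + [(a, b) ∈ M, a + b odd] · m/2 (mod m)`:
the left side is nonzero exactly when just one of the terms on the right is, and two shifts by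
`m/2` cancel mod `m`.
-/

section

variable {n : ℕ} {a b x y : ℤ}

lemma m_pos (n : ℕ) : 0 < m n := by unfold m; positivity

lemma two_pow_eq_two_mul_m (hn : 1 ≤ n) : (2 : ℤ) ^ n = 2 * m n := by
  rw [m, ← pow_succ', Nat.sub_add_cancel hn]

lemma m_div_two (hn : 2 ≤ n) : m n / 2 = 2 ^ (n - 2) := by
  rw [m, show n - 1 = n - 2 + 1 by omega, pow_succ, Int.mul_ediv_cancel _ two_ne_zero]

lemma m_div_two_add_m_div_two (hn : 2 ≤ n) : m n / 2 + m n / 2 = m n := by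
  rw [m_div_two hn, m, show n - 1 = n - 2 + 1 by omega, pow_succ]; ring

lemma even_m_div_two (hn : 3 ≤ n) : Even (m n / 2) := by
  rw [m_div_two (by omega)]; exact Int.even_pow.2 ⟨even_two, by omega⟩

lemma mem_Gset_iff (hn : 1 ≤ n) : x ∈ Gset n ↔ x ∈ Pset n ∪ Hset n := by
  simp only [Gset, Pset, Hset, Set.mem_union, Set.mem_ofPred_eq, two_pow_eq_two_mul_m hn]
  have := m_pos n
  omega

lemma not_mem_Hset_of_mem_Pset (hx : x ∈ Pset n) : x ∉ Hset n := fun hH => by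
  simp only [Pset, Hset, Set.mem_ofPred_eq] at hx hH; omega

lemma emod_mem_Pset (n : ℕ) (x : ℤ) : x % m n ∈ Pset n :=
  ⟨Int.emod_nonneg x (m_pos n).ne', Int.emod_lt_of_pos x (m_pos n)⟩

lemma emod_add_m_mem_Hset (n : ℕ) (x : ℤ) : x % m n + m n ∈ Hset n := by
  have := emod_mem_Pset n x
  simp only [Pset, Hset, Set.mem_ofPred_eq] at this ⊢; omega

lemma emod_add_m_not_mem_Pset (n : ℕ) (x : ℤ) : x % m n + m n ∉ Pset n := fun hP =>
  not_mem_Hset_of_mem_Pset hP (emod_add_m_mem_Hset n x)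

lemma eq_of_modEq_of_mem_Pset_iff (hx : x ∈ Pset n ∪ Hset n) (hy : y ∈ Pset n ∪ Hset n)
    (hxy : x ≡ y [ZMOD m n]) (hP : x ∈ Pset n ↔ y ∈ Pset n) : x = y := by
  simp only [Pset, Hset, Set.mem_union, Set.mem_ofPred_eq] at hx hy hP
  have := Int.eq_zero_of_abs_lt_dvd hxy.dvd (abs_lt.2 ⟨by omega, by omega⟩)
  omega

lemma odd_iff_mem_OP_or_mem_OH (hx : x ∈ Pset n ∪ Hset n) : Odd x ↔ x ∈ OP n ∨ x ∈ OH n := by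
  simp only [OP, OH, Set.mem_ofPred_eq]; rw [Set.mem_union] at hx; tauto

def twist (n : ℕ) (a b : ℤ) : ℤ := if a ∈ EH n ∧ Odd b then m n / 2 else 0

lemma oplus_modEq (hb : b ∈ Pset n ∪ Hset n) :
    oplus n a b ≡ a + b + twist n a b [ZMOD m n] := by
  unfold oplus twist
  simp only [odd_iff_mem_OP_or_mem_OH hb]
  split_ifs <;> try simp only [add_zero]
  all_goals first
    | exact Int.mod_modEq _ _
    | exact Int.add_modEq_right.trans (Int.mod_modEq _ _)
    | (exfalso; tauto)

lemma oplus_mem (n : ℕ) (a b : ℤ) : oplus n a b ∈ Pset n ∪ Hset n := by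
  unfold oplus
  split_ifs
  all_goals first
    | exact Or.inl (emod_mem_Pset _ _)
    | exact Or.inr (emod_add_m_mem_Hset _ _)

lemma oplus_mem_Pset_iff (ha : a ∈ Pset n ∪ Hset n) (hb : b ∈ Pset n ∪ Hset n) :
    oplus n a b ∈ Pset n ↔ (a ∈ Pset n ↔ b ∈ Pset n) := by
  have hPH : ∀ x, x ∈ Pset n → x ∉ Hset n := fun _ => not_mem_Hset_of_mem_Pset
  unfold oplus
  rw [Set.mem_union] at ha hb
  split_ifs
  all_goals
    simp only [emod_mem_Pset, emod_add_m_not_mem_Pset, true_iff, false_iff]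
    simp only [EH, OH, OP, Set.mem_ofPred_eq] at *
    tauto

lemma odd_oplus_iff (hn : 3 ≤ n) (hb : b ∈ Pset n ∪ Hset n) :
    Odd (oplus n a b) ↔ Odd (a + b) := by
  have hmod2 := (oplus_modEq (a := a) hb).of_dvd
    ⟨m n / 2, by rw [two_mul, m_div_two_add_m_div_two (by omega)]⟩
  have htwist : Even (twist n a b) := by
    unfold twist; split_ifs
    exacts [even_m_div_two hn, Even.zero]
  rw [Int.ModEq] at hmod2
  rw [Int.even_iff] at htwist
  simp only [Int.odd_iff]
  omega

lemma Amap_modEq (hx : x ∈ Pset n ∪ Hset n) :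
    Amap n x ≡ x + (if Odd x then m n / 2 else 0) [ZMOD m n] := by
  unfold Amap
  simp only [odd_iff_mem_OP_or_mem_OH hx]
  split_ifs <;> try simp only [add_zero]
  all_goals first
    | exact Int.mod_modEq _ _
    | exact Int.add_modEq_right.trans (Int.mod_modEq _ _)
    | rfl
    | (exfalso; tauto)

lemma Amap_mem (hx : x ∈ Pset n ∪ Hset n) : Amap n x ∈ Pset n ∪ Hset n := by
  unfold Amap
  split_ifs
  exacts [Or.inl (emod_mem_Pset _ _), Or.inr (emod_add_m_mem_Hset _ _), hx]

lemma Amap_mem_Pset_iff : Amap n x ∈ Pset n ↔ x ∈ Pset n := by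
  unfold Amap
  split_ifs with hOP hOH
  · exact iff_of_true (emod_mem_Pset _ _) hOP.1
  · exact iff_of_false (emod_add_m_not_mem_Pset _ _) fun hP => not_mem_Hset_of_mem_Pset hP hOH.1
  · rfl

lemma gyr_modEq (hx : x ∈ Pset n ∪ Hset n) :
    gyr n a b x ≡ x + (if (a, b) ∈ Mset n ∧ Odd x then m n / 2 else 0) [ZMOD m n] := by
  by_cases h : (a, b) ∈ Mset n
  · simpa only [gyr, h, if_true, true_and] using Amap_modEq hx
  · simp only [gyr, h, if_false, false_and, add_zero, id]; rfl

lemma gyr_mem (hx : x ∈ Pset n ∪ Hset n) : gyr n a b x ∈ Pset n ∪ Hset n := by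
  unfold gyr
  split_ifs
  exacts [Amap_mem hx, hx]

lemma gyr_mem_Pset_iff : gyr n a b x ∈ Pset n ↔ x ∈ Pset n := by
  unfold gyr
  split_ifs
  exacts [Amap_mem_Pset_iff, Iff.rfl]

lemma twist_iff_xor (ha : a ∈ Pset n ∪ Hset n) (hb : b ∈ Pset n ∪ Hset n) :
    (a ∈ EH n ∧ Odd b) ↔ Xor (b ∈ EH n ∧ Odd a) ((a, b) ∈ Mset n ∧ Odd (a + b)) := by
  simp only [Xor, Mset, OP, OH, EH, Pset, Hset, Set.mem_union, Set.mem_prod, Set.mem_ofPred_eq,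
    Int.odd_iff, Int.even_iff] at ha hb ⊢
  constructor <;> intro h <;> omega

lemma ite_modEq_add_ite_of_iff_xor {p q r : Prop} [Decidable p] [Decidable q] [Decidable r]
    (c : ℤ) (h : p ↔ Xor q r) :
    (if p then c else 0) ≡ (if q then c else 0) + (if r then c else 0) [ZMOD 2 * c] := by
  by_cases hq : q <;> by_cases hr : r <;>
    simp only [Xor, hq, hr, not_true_eq_false, not_false_eq_true, and_true, and_false, and_self,
      or_self, or_true, or_false, iff_true, iff_false] at h <;>
    simp only [h, hq, hr, if_true, if_false, add_zero, zero_add, Int.ModEq.refl]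
  exact (Int.modEq_zero_iff_dvd.2 ⟨1, by ring⟩).symm

lemma twist_modEq (hn : 2 ≤ n) (ha : a ∈ Pset n ∪ Hset n) (hb : b ∈ Pset n ∪ Hset n) :
    twist n a b ≡ twist n b a + (if (a, b) ∈ Mset n ∧ Odd (a + b) then m n / 2 else 0)
      [ZMOD m n] := by
  have := ite_modEq_add_ite_of_iff_xor (m n / 2) (twist_iff_xor ha hb)
  rwa [two_mul, m_div_two_add_m_div_two hn] at this

end

/-- gyrocommutativity. -/
theorem stmt10 (n : ℕ) (hn : 3 ≤ n) :
    ∀ a ∈ Gset n, ∀ b ∈ Gset n,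
      oplus n a b = gyr n a b (oplus n b a) := by
  intro a ha b hb
  rw [mem_Gset_iff (by omega)] at ha hb
  refine eq_of_modEq_of_mem_Pset_iff (oplus_mem n a b) (gyr_mem (oplus_mem n b a)) ?_ ?_
  · calc oplus n a b ≡ a + b + twist n a b [ZMOD m n] := oplus_modEq hb
      _ ≡ b + a + (twist n b a + if (a, b) ∈ Mset n ∧ Odd (b + a) then m n / 2 else 0)
          [ZMOD m n] := by
        rw [add_comm b a]; exact (twist_modEq (by omega) ha hb).add_left _
      _ ≡ oplus n b a + (if (a, b) ∈ Mset n ∧ Odd (oplus n b a) then m n / 2 else 0)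
          [ZMOD m n] := by
        simp only [odd_oplus_iff hn ha, ← add_assoc]; exact (oplus_modEq ha).symm.add_right _
      _ ≡ gyr n a b (oplus n b a) [ZMOD m n] := (gyr_modEq (oplus_mem n b a)).symm
  · rw [oplus_mem_Pset_iff ha hb, gyr_mem_Pset_iff, oplus_mem_Pset_iff hb ha]
    exact iff_comm
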